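/- arXiv:1810.02946 — 2 statements merged into one kernel-verified Lean document; each statement's English description precedes it below -/
import Mathlib

section
/- (Legendre curve) For λ > 0 define F_0(λ) = −λ²·log 2, F_1(λ) = −(1/4)·log λ, and F_g(λ) = (B_{2g}/(2g(2g−2)))·( 4·λ^{2−2g} − (2λ)^{2−2g} ) for g ≥ 2. Then for every integer n ≥ 1 and every λ > 0, Σ_{k=1}^{n} (2/(2k)!) · F_{n−k}^{(2k)}(λ) = log(4λ⁴) − 4·log(2λ) (= −2 log 2) if n = 1, and = (1/(n−1))·(2λ)^{2−2n} if n ≥ 2. (That is, the free energy F(λ;ℏ) = Σ_{g≥0} ℏ^{2g−2} F_g(λ) of the Legendre spectral curve satisfies F(λ+ℏ) − 2F(λ) + F(λ−ℏ) = log(4λ⁴) − 2log(2λ) − log(2λ+ℏ) − log(2λ−ℏ) order by order in ℏ, using log(2λ+ℏ)+log(2λ−ℏ) = 2log(2λ) − Σ_{m≥1}(1/m)(ℏ/(2λ))^{2m}.) -/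
/-!
Every `F_g` with `g ≥ 2` is a multiple of `λ^{2-2g}`, so each term of the order-`ℏ^{2n-2}`
coefficient is a multiple of `λ^{2-2n}`; after cancelling factorials, the term coming from `F_g`
is `(2g-1) C(2n,2g) B_{2g} (4 - 2^{2-2g}) / (n(2n-1)(2n-2))` times `λ^{2-2n}`. Because
`(i-1) C(m,i) B_i` vanishes for odd `i`, the even sum `Σ_g (2g-1) C(2n,2g) B_{2g} y^{2n-2g}` equals
`(2n-1) B_{2n}(y) - 2n y B_{2n-1}(y)` in terms of Bernoulli polynomials, and its values at `y = 1`
and `y = 2` (where `B_k(2) = B_k(1) + k`) give `Σ_{2 ≤ g < n}` of these coefficients in closed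
form. The logarithmic `F_1` contributes `λ^{2-2n} / (4(n-1))`, which cancels the `-1/4` in it.
-/

open Finset Nat

lemma iteratedDeriv_const_mul_zpow {𝕜 : Type*} [NontriviallyNormedField 𝕜] (c : 𝕜) (p : ℤ)
    (k : ℕ) (x : 𝕜) :
    iteratedDeriv k (fun y => c * y ^ p) x
      = c * (∏ i ∈ range k, ((p : 𝕜) - i)) * x ^ (p - k) := by
  rw [iteratedDeriv_const_mul_field, iteratedDeriv_eq_iterate, iter_deriv_zpow, mul_assoc]

lemma Real.iteratedDeriv_succ_log (k : ℕ) (x : ℝ) :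
    iteratedDeriv (k + 1) Real.log x = (-1) ^ k * k ! * x ^ (-1 - k : ℤ) := by
  rw [iteratedDeriv_succ', Real.deriv_log', iteratedDeriv_eq_iterate, iter_deriv_inv]

lemma iteratedDeriv_eq_of_forall_pos {f g : ℝ → ℝ} (h : ∀ y, 0 < y → f y = g y) (k : ℕ) {l : ℝ}
    (hl : 0 < l) : iteratedDeriv k f l = iteratedDeriv k g l :=
  Filter.EventuallyEq.iteratedDeriv_eq k ((eventually_gt_nhds hl).mono h)

lemma prod_range_neg_sub_mul_factorial {R : Type*} [CommRing R] (a K : ℕ) :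
    (∏ i ∈ range K, (-((a : R) + 1) - i)) * a ! = (-1) ^ K * (a + K)! := by
  have h : ∏ i ∈ range K, (-((a : R) + 1) - i) = (-1) ^ K * ((a + 1).ascFactorial K : ℕ) := by
    rw [ascFactorial_eq_prod_range, Nat.cast_prod, ← card_range K, ← prod_const, card_range,
      ← prod_mul_distrib]
    exact prod_congr rfl fun i _ => by push_cast; ring
  rw [h, mul_assoc, ← Nat.cast_mul, mul_comm _ (a !), factorial_mul_ascFactorial]

lemma sum_Icc_one_eq_sum_range_sub {M : Type*} [AddCommMonoid M] (f : ℕ → ℕ → M) (n : ℕ) :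
    ∑ k ∈ Icc 1 n, f k (n - k) = ∑ g ∈ range n, f (n - g) g := by
  refine sum_nbij' (n - ·) (n - ·) ?_ ?_ ?_ ?_ ?_ <;> intro i hi <;> grind

lemma Polynomial.bernoulli_eval_eq_sum (m : ℕ) (y : ℚ) :
    (bernoulli m).eval y = ∑ i ∈ range (m + 1), _root_.bernoulli i * m.choose i * y ^ (m - i) := by
  simp [bernoulli, eval_finsetSum]

lemma sum_range_sub_one_mul_bernoulli_mul_choose_mul_pow (p : ℕ) (y : ℚ) :
    ∑ i ∈ range (p + 2), ((i : ℚ) - 1) * bernoulli i * (p + 1).choose i * y ^ (p + 1 - i)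
      = p * (Polynomial.bernoulli (p + 1)).eval y
        - (p + 1) * y * (Polynomial.bernoulli p).eval y := by
  rw [Polynomial.bernoulli_eval_eq_sum, Polynomial.bernoulli_eval_eq_sum, sum_range_succ,
    sum_range_succ _ (p + 1), mul_add, mul_sum, mul_sum, add_sub_right_comm, ← sum_sub_distrib]
  congr 1
  · refine sum_congr rfl fun i hi => ?_
    have hi : i ≤ p := Nat.lt_succ_iff.mp (mem_range.mp hi)
    have hchoose := congrArg (Nat.cast (R := ℚ)) (Nat.choose_mul_succ_eq p i)
    push_cast [Nat.cast_sub (show i ≤ p + 1 by omega)] at hchoose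
    rw [show p + 1 - i = p - i + 1 by omega, pow_succ]
    linear_combination bernoulli i * y ^ (p - i) * y * hchoose
  · simp

lemma sum_range_two_mul_add_one_eq_sum_even {M : Type*} [AddCommMonoid M] (f : ℕ → M)
    (hf : ∀ g, f (2 * g + 1) = 0) (N : ℕ) :
    ∑ i ∈ range (2 * N + 1), f i = ∑ g ∈ range (N + 1), f (2 * g) := by
  induction N with
  | zero => simp
  | succ N ih => rw [show 2 * (N + 1) + 1 = 2 * N + 1 + 1 + 1 by ring, sum_range_succ,
      sum_range_succ, ih, hf, add_zero, sum_range_succ _ (N + 1), mul_add, mul_one]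

lemma sum_range_two_mul_sub_one_mul_bernoulli_mul_choose_mul_pow (N : ℕ) (y : ℚ) :
    ∑ g ∈ range (N + 2), (2 * (g : ℚ) - 1) * bernoulli (2 * g) * (2 * (N + 1)).choose (2 * g)
        * y ^ (2 * (N + 1) - 2 * g)
      = (2 * N + 1) * (Polynomial.bernoulli (2 * (N + 1))).eval y
        - (2 * N + 2) * y * (Polynomial.bernoulli (2 * N + 1)).eval y := by
  have hodd (g : ℕ) : ((2 * g + 1 : ℕ) - 1 : ℚ) * bernoulli (2 * g + 1) = 0 := by
    rcases g with _ | g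
    · simp
    · rw [bernoulli_eq_zero_of_odd (odd_two_mul_add_one _) (by omega), mul_zero]
  have := sum_range_sub_one_mul_bernoulli_mul_choose_mul_pow (2 * N + 1) y
  rw [show 2 * N + 1 + 2 = 2 * (N + 1) + 1 by ring,
    sum_range_two_mul_add_one_eq_sum_even _ (fun g => by simp only [hodd, zero_mul]),
    show 2 * N + 1 + 1 = 2 * (N + 1) by ring] at this
  push_cast at this ⊢
  convert this using 3
  ring

lemma Polynomial.bernoulli_eval_two (k : ℕ) : (bernoulli k).eval 2 = bernoulli' k + k := by
  rw [show (2 : ℚ) = 1 + 1 by norm_num, bernoulli_eval_one_add, bernoulli_eval_one, one_pow,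
    mul_one]

def legendreWeight (N G : ℕ) : ℚ :=
  (2 * G - 1) * bernoulli (2 * G) * (2 * N).choose (2 * G) * (4 - 2 ^ (2 - 2 * (G : ℤ)))

lemma sum_range_legendreWeight (N : ℕ) (hN : 2 ≤ N) :
    ∑ G ∈ range (N + 1), legendreWeight N G
      = (2 * N - 1)
        * (4 * bernoulli (2 * N) - 2 ^ (2 - 2 * (N : ℤ)) * (bernoulli (2 * N) - 2 * N)) := by
  obtain ⟨M, rfl⟩ : ∃ M, N = M + 1 := ⟨N - 1, by omega⟩
  have hsplit (G : ℕ) (hG : G ∈ range (M + 2)) : legendreWeight (M + 1) G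
      = 4 * ((2 * G - 1) * bernoulli (2 * G) * (2 * (M + 1)).choose (2 * G)
          * 1 ^ (2 * (M + 1) - 2 * G))
        - 2 ^ (- 2 * (M : ℤ)) * ((2 * G - 1) * bernoulli (2 * G) * (2 * (M + 1)).choose (2 * G)
          * 2 ^ (2 * (M + 1) - 2 * G)) := by
    have : (2 : ℚ) ^ (2 - 2 * (G : ℤ)) = 2 ^ (- 2 * (M : ℤ)) * 2 ^ (2 * (M + 1) - 2 * G) := by
      rw [← zpow_natCast, ← zpow_add₀ two_ne_zero]
      congr 1
      push_cast [Nat.cast_sub (show 2 * G ≤ 2 * (M + 1) by grind)]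
      ring
    rw [legendreWeight, this, one_pow, mul_one]
    ring
  have hodd : bernoulli' (2 * M + 1) = 0 :=
    bernoulli'_eq_zero_of_odd (odd_two_mul_add_one M) (by omega)
  rw [sum_congr rfl hsplit, sum_sub_distrib, ← mul_sum, ← mul_sum,
    sum_range_two_mul_sub_one_mul_bernoulli_mul_choose_mul_pow,
    sum_range_two_mul_sub_one_mul_bernoulli_mul_choose_mul_pow,
    Polynomial.bernoulli_eval_one, Polynomial.bernoulli_eval_one, Polynomial.bernoulli_eval_two,
    Polynomial.bernoulli_eval_two, hodd, ← bernoulli_eq_bernoulli'_of_ne_one (by omega)]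
  push_cast
  rw [show (2 : ℤ) - 2 * (M + 1) = -2 * M by ring]
  ring

lemma sum_Ico_legendreWeight (N : ℕ) (hN : 2 ≤ N) :
    ∑ G ∈ Ico 2 N, legendreWeight N G
      = 2 * N * (2 * N - 1) * (2 ^ (2 - 2 * (N : ℤ)) - 1 / 4) := by
  have h := sum_range_legendreWeight N hN
  rw [sum_range_succ, ← sum_range_add_sum_Ico _ hN, sum_range_succ, sum_range_one] at h
  have hw0 : legendreWeight N 0 = 0 := by norm_num [legendreWeight]
  have hw1 : legendreWeight N 1 = N * (2 * N - 1) / 2 := by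
    norm_num [legendreWeight, Nat.cast_choose_two, bernoulli_two]
    ring
  rw [hw0, hw1, legendreWeight, Nat.choose_self] at h
  push_cast at h
  linear_combination h

section LegendreFreeEnergy

variable {F : ℕ → ℝ → ℝ} {l : ℝ}

lemma iteratedDeriv_free_energy_zero (hF0 : ∀ l : ℝ, 0 < l → F 0 l = -(l ^ 2) * Real.log 2)
    (hl : 0 < l) (k : ℕ) :
    iteratedDeriv k (F 0) l = -Real.log 2 * (∏ i ∈ range k, ((2 : ℝ) - i)) * l ^ (2 - k : ℤ) := by
  rw [iteratedDeriv_eq_of_forall_pos (g := fun y => -Real.log 2 * y ^ (2 : ℤ)) _ k hl,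
    iteratedDeriv_const_mul_zpow]
  · rfl
  · intro y hy
    rw [hF0 y hy, zpow_two, sq]
    ring

lemma iteratedDeriv_two_free_energy_zero (hF0 : ∀ l : ℝ, 0 < l → F 0 l = -(l ^ 2) * Real.log 2)
    (hl : 0 < l) : iteratedDeriv 2 (F 0) l = -2 * Real.log 2 := by
  rw [iteratedDeriv_free_energy_zero hF0 hl]
  norm_num [prod_range_succ]
  ring

lemma iteratedDeriv_free_energy_zero_of_three_le
    (hF0 : ∀ l : ℝ, 0 < l → F 0 l = -(l ^ 2) * Real.log 2) (hl : 0 < l) {k : ℕ} (hk : 3 ≤ k) :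
    iteratedDeriv k (F 0) l = 0 := by
  rw [iteratedDeriv_free_energy_zero hF0 hl, prod_eq_zero (mem_range.mpr hk) (by norm_num),
    mul_zero, zero_mul]

lemma two_div_factorial_mul_iteratedDeriv_free_energy_one
    (hF1 : ∀ l : ℝ, 0 < l → F 1 l = -(1 / 4) * Real.log l) (hl : 0 < l) (N : ℕ) (hN : 2 ≤ N) :
    2 / ((2 * (N - 1)).factorial : ℝ) * iteratedDeriv (2 * (N - 1)) (F 1) l
      = 1 / (4 * ((N : ℝ) - 1)) * l ^ (2 - 2 * (N : ℤ)) := by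
  obtain ⟨k, rfl⟩ : ∃ k, N = k + 2 := ⟨N - 2, by omega⟩
  rw [iteratedDeriv_eq_of_forall_pos (g := fun y => -(1 / 4) * Real.log y) hF1 _ hl,
    iteratedDeriv_const_mul_field, show 2 * (k + 2 - 1) = 2 * k + 1 + 1 by omega,
    Real.iteratedDeriv_succ_log, Odd.neg_one_pow (odd_two_mul_add_one k), Nat.factorial_succ]
  push_cast
  rw [show (-1 - (2 * (k : ℤ) + 1)) = 2 - 2 * (k + 2) by ring,
    show (k : ℝ) + 2 - 1 = k + 1 by ring]
  field_simp
  ring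

lemma two_div_factorial_mul_iteratedDeriv_free_energy
    (hFg : ∀ g : ℕ, 2 ≤ g → ∀ l : ℝ, 0 < l →
      F g l = (bernoulli (2 * g) : ℝ) / (2 * (g : ℝ) * (2 * (g : ℝ) - 2))
                * (4 * l ^ (2 - 2 * (g : ℤ)) - (2 * l) ^ (2 - 2 * (g : ℤ))))
    (hl : 0 < l) {N G : ℕ} (hG : 2 ≤ G) (hGN : G ≤ N) :
    2 / ((2 * (N - G)).factorial : ℝ) * iteratedDeriv (2 * (N - G)) (F G) l
      = legendreWeight N G / (N * (2 * N - 1) * (2 * N - 2)) * l ^ (2 - 2 * (N : ℤ)) := by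
  obtain ⟨a, rfl⟩ : ∃ a, G = a + 2 := ⟨G - 2, by omega⟩
  obtain ⟨K, rfl⟩ : ∃ K, N = a + 2 + K := ⟨N - (a + 2), by omega⟩
  set c : ℝ := (bernoulli (2 * (a + 2)) : ℝ)
    / (2 * ((a + 2 : ℕ) : ℝ) * (2 * ((a + 2 : ℕ) : ℝ) - 2))
    * (4 - 2 ^ (2 - 2 * ((a + 2 : ℕ) : ℤ))) with hc
  have hF : ∀ y, 0 < y → F (a + 2) y = c * y ^ (2 - 2 * ((a + 2 : ℕ) : ℤ)) := fun y hy => by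
    rw [hFg _ hG y hy, mul_zpow]
    ring
  have hprod : ∏ i ∈ range (2 * K), (((2 - 2 * ((a + 2 : ℕ) : ℤ) : ℤ) : ℝ) - i)
      = (2 * (a + K) + 1)! / (2 * a + 1)! := by
    have h := prod_range_neg_sub_mul_factorial (R := ℝ) (2 * a + 1) (2 * K)
    rw [(even_two_mul K).neg_one_pow, one_mul,
      show 2 * a + 1 + 2 * K = 2 * (a + K) + 1 by ring] at h
    rw [eq_div_iff (by positivity), ← h]
    congr 1
    exact prod_congr rfl fun i _ => by push_cast; ring
  have hfactorial (b : ℕ) :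
      ((2 * (b + 2))! : ℝ) = (2 * b + 4) * (2 * b + 3) * (2 * b + 2) * (2 * b + 1)! := by
    push_cast [show 2 * (b + 2) = 2 * b + 1 + 1 + 1 + 1 by ring, Nat.factorial_succ]
    ring
  rw [iteratedDeriv_eq_of_forall_pos hF _ hl, iteratedDeriv_const_mul_zpow, Nat.add_sub_cancel_left,
    ← mul_assoc, ← mul_assoc]
  congr 1
  · rw [hprod, legendreWeight, hc]
    push_cast
    rw [Nat.cast_choose ℝ (show 2 * (a + 2) ≤ 2 * (a + 2 + K) by omega),
      show 2 * (a + 2 + K) - 2 * (a + 2) = 2 * K by omega, show a + 2 + K = a + K + 2 by ring,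
      hfactorial, hfactorial]
    push_cast
    rw [show 2 * ((a : ℝ) + 2 + K) - 1 = 2 * (a + K) + 3 by ring,
      show 2 * ((a : ℝ) + 2 + K) - 2 = 2 * (a + K) + 2 by ring,
      show 2 * ((a : ℝ) + 2) - 2 = 2 * a + 2 by ring]
    field_simp
    ring
  · congr 1
    push_cast
    ring

end LegendreFreeEnergy

/-- (Legendre curve) The free energy `F(λ;ℏ) = Σ_{g≥0} ℏ^{2g−2} F_g(λ)` with
`F_0 = −λ²log 2`, `F_1 = −(1/4)log λ`,
`F_g = (B_{2g}/(2g(2g−2)))(4λ^{2−2g} − (2λ)^{2−2g})` (g ≥ 2) satisfies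
`F(λ+ℏ) − 2F(λ) + F(λ−ℏ) = log(4λ⁴) − 2log(2λ) − log(2λ+ℏ) − log(2λ−ℏ)`
order by order in `ℏ`. -/
theorem stmt13 (F : ℕ → ℝ → ℝ)
    (hF0 : ∀ l : ℝ, 0 < l → F 0 l = -(l ^ 2) * Real.log 2)
    (hF1 : ∀ l : ℝ, 0 < l → F 1 l = -(1 / 4) * Real.log l)
    (hFg : ∀ g : ℕ, 2 ≤ g → ∀ l : ℝ, 0 < l →
      F g l = (bernoulli (2 * g) : ℝ) / (2 * (g : ℝ) * (2 * (g : ℝ) - 2))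
                * (4 * l ^ (2 - 2 * (g : ℤ)) - (2 * l) ^ (2 - 2 * (g : ℤ))))
    (n : ℕ) (hn : 1 ≤ n) (l : ℝ) (hl : 0 < l) :
    ∑ k ∈ Finset.Icc 1 n,
        2 / (Nat.factorial (2 * k) : ℝ) * iteratedDeriv (2 * k) (F (n - k)) l
      = if n = 1 then Real.log (4 * l ^ 4) - 4 * Real.log (2 * l)
        else 1 / ((n : ℝ) - 1) * (2 * l) ^ (2 - 2 * (n : ℤ)) := by
  rcases Nat.lt_or_ge n 2 with hn2 | hn2
  · obtain rfl : n = 1 := by omega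
    rw [if_pos rfl, Icc_self, sum_singleton, iteratedDeriv_two_free_energy_zero hF0 hl,
      Real.log_mul (by norm_num) (by positivity), Real.log_mul two_ne_zero hl.ne', Real.log_pow,
      show (4 : ℝ) = 2 ^ 2 by norm_num, Real.log_pow]
    norm_num
    ring
  rw [if_neg (by omega),
    sum_Icc_one_eq_sum_range_sub fun k g => 2 / ((2 * k)! : ℝ) * iteratedDeriv (2 * k) (F g) l,
    ← sum_range_add_sum_Ico _ hn2, sum_range_succ, sum_range_one, Nat.sub_zero,
    iteratedDeriv_free_energy_zero_of_three_le hF0 hl (by omega), mul_zero, zero_add,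
    two_div_factorial_mul_iteratedDeriv_free_energy_one hF1 hl n hn2,
    sum_congr rfl fun G hG => two_div_factorial_mul_iteratedDeriv_free_energy hFg hl
      (mem_Ico.mp hG).1 (mem_Ico.mp hG).2.le,
    ← sum_mul, ← sum_div, ← Rat.cast_sum, sum_Ico_legendreWeight n hn2, mul_zpow]
  have hn2' : (2 : ℝ) ≤ n := by exact_mod_cast hn2
  have hcancel : 2 * (n : ℝ) * (2 * n - 1) * (2 ^ (2 - 2 * (n : ℤ)) - 1 / 4)
      / (n * (2 * n - 1) * (2 * n - 2)) = (2 ^ (2 - 2 * (n : ℤ)) - 1 / 4) / (n - 1) := by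
    rw [div_eq_div_iff (by apply_rules [mul_ne_zero] <;> linarith) (by linarith)]
    ring
  push_cast
  rw [hcancel]
  field_simp
  ring
end

section
/- Let λ₀, λ₁, λ∞ ∈ ℝ satisfy λ₀ + ελ₁ + ηλ∞ > 0 for all ε, η ∈ {+1,−1} (and λ₀,λ₁,λ∞ > 0). Set Λ = Π_{ε,η∈{±1}} (λ₀ + ελ₁ + ηλ∞). Define G_0 = Σ_{ε,η∈{±1}} ((λ₀+ελ₁+ηλ∞)²/2)·log(λ₀+ελ₁+ηλ∞) − 3(λ₀²+λ₁²+λ∞²), G_1 = −(1/12)·log Λ, and G_g = (B_{2g}/(2g(2g−2)))·Σ_{ε,η∈{±1}} (λ₀+ελ₁+ηλ∞)^{2−2g} for g ≥ 2. Then for each j ∈ {0,1,∞} and every integer n ≥ 1, Σ_{k=1}^{n} (2/(2k)!) · ∂_{λ_j}^{2k} G_{n−k} = log Λ if n = 1, and = 0 if n ≥ 2. (That is, the formal series G = Σ_{g≥0} ℏ^{2g−2} G_g satisfies X_j G = log Λ for each j, where X_j is the second difference operator in the variable λ_j.) -/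
/-!
On the domain, `G_g = ∑_{ε,η} φ_g(λ₀ + ελ₁ + ηλ∞)` for the one-variable functions
`φ_g = genusTerm g`: `φ₀ = u²/2 · log u - 3u²/4` (the quadratic terms add up to
`-3(λ₀² + λ₁² + λ∞²)`), `φ₁ = -log u / 12` and `φ_g = B_{2g}/(2g(2g-2)) · u^{2-2g}`.
Each linear form has derivative `±1` in each `λ_j`, so even `λ_j`-derivatives are even
`u`-derivatives, and it suffices that `Φ = ∑ ℏ^{2g-2} φ_g` satisfies
`Φ(u + ℏ) - 2Φ(u) + Φ(u - ℏ) = log u`. At order `ℏ⁰` this is `φ₀'' = log u`. Beyond it,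
`φ_g^{(m)} = (-1)^m (2g-1) B_{2g}/(2g)! · (2g+m-3)! · u^{2-2g-m}` turns the coefficient of
`ℏ^{2n-2}` into a multiple of `∑_{g<n} (2g-1) C(2n,2g) B_{2g}`. That sum is
`∑_{k<2n} (k-1) C(2n,k) B_k` (odd `k` contribute nothing)
`= (2n-1) ∑ C(2n,k) B_k - 2n ∑ C(2n-1,k) B_k`, and both Bernoulli sums vanish.
-/

open Finset Real Filter Topology
open scoped Nat ContDiff

theorem Finset.sum_range_two_mul {M : Type*} [AddCommMonoid M] (f : ℕ → M) (n : ℕ) :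
    ∑ k ∈ range (2 * n), f k = ∑ i ∈ range n, (f (2 * i) + f (2 * i + 1)) := by
  induction n with
  | zero => simp
  | succ n ih => rw [mul_add_one, sum_range_succ, sum_range_succ, sum_range_succ, ih, add_assoc]

theorem sum_range_choose_mul_bernoulli_eq_zero {N : ℕ} (hN : 2 ≤ N) :
    ∑ k ∈ range N, (N.choose k : ℚ) * bernoulli k = 0 := by
  rw [sum_bernoulli, if_neg (by omega)]

theorem sum_range_sub_mul_choose_mul_bernoulli_eq_zero {n : ℕ} (hn : 2 ≤ n) :
    ∑ k ∈ range (2 * n), ((2 * n : ℚ) - k) * (2 * n).choose k * bernoulli k = 0 := by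
  obtain ⟨N, hN⟩ : ∃ N, 2 * n = N + 1 := ⟨2 * n - 1, by omega⟩
  have hterm : ∀ k ∈ range (N + 1),
      ((N + 1 : ℚ) - k) * (N + 1).choose k * bernoulli k
        = (N + 1) * (N.choose k * bernoulli k) := by
    intro k hk
    have h : ((N.choose k * (N + 1) : ℕ) : ℚ) = ((N + 1).choose k * (N + 1 - k) : ℕ) :=
      congrArg _ (Nat.choose_mul_succ_eq N k)
    push_cast [Nat.cast_sub (mem_range.1 hk).le] at h
    linear_combination (-bernoulli k) * h
  have hodd : bernoulli N = 0 := bernoulli_eq_zero_of_odd ⟨n - 1, by omega⟩ (by omega)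
  rw [show (2 * n : ℚ) = N + 1 by exact_mod_cast hN, hN, sum_congr rfl hterm, ← mul_sum,
    sum_range_succ, sum_range_choose_mul_bernoulli_eq_zero (by omega), hodd]
  simp

theorem sum_range_two_mul_sub_one_mul_choose_mul_bernoulli_eq_zero {n : ℕ} (hn : 2 ≤ n) :
    ∑ g ∈ range n, (2 * g - 1 : ℚ) * (2 * n).choose (2 * g) * bernoulli (2 * g) = 0 := by
  have hall : ∑ k ∈ range (2 * n), ((k : ℚ) - 1) * (2 * n).choose k * bernoulli k = 0 := by
    calc _ = (2 * n - 1 : ℚ) * ∑ k ∈ range (2 * n), ((2 * n).choose k : ℚ) * bernoulli k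
          - ∑ k ∈ range (2 * n), ((2 * n : ℚ) - k) * (2 * n).choose k * bernoulli k := by
            rw [mul_sum, ← sum_sub_distrib]
            exact sum_congr rfl fun k _ => by ring
      _ = 0 := by
        rw [sum_range_choose_mul_bernoulli_eq_zero (by omega),
          sum_range_sub_mul_choose_mul_bernoulli_eq_zero hn]
        ring
  rw [← hall, sum_range_two_mul]
  refine sum_congr rfl fun g _ => ?_
  rcases Nat.eq_zero_or_pos g with rfl | hg
  · simp
  · rw [bernoulli_eq_zero_of_odd (odd_two_mul_add_one g) (by omega)]
    push_cast
    ring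

noncomputable def genusTerm (g : ℕ) (u : ℝ) : ℝ :=
  match g with
  | 0 => u ^ 2 / 2 * log u - 3 / 4 * u ^ 2
  | 1 => -(1 / 12) * log u
  | g => (bernoulli (2 * g) : ℝ) / (2 * (g : ℝ) * (2 * (g : ℝ) - 2)) * u ^ (2 - 2 * (g : ℤ))

theorem genusTerm_of_two_le {g : ℕ} (hg : 2 ≤ g) (u : ℝ) :
    genusTerm g u
      = (bernoulli (2 * g) : ℝ) / (2 * (g : ℝ) * (2 * (g : ℝ) - 2)) * u ^ (2 - 2 * (g : ℤ)) := by
  rw [genusTerm.eq_3] <;> omega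

theorem analyticAt_genusTerm (g : ℕ) {u : ℝ} (hu : 0 < u) : AnalyticAt ℝ (genusTerm g) u := by
  match g with
  | 0 => exact (by fun_prop (disch := assumption) :
      AnalyticAt ℝ (fun u : ℝ => u ^ 2 / 2 * log u - 3 / 4 * u ^ 2) u)
  | 1 => exact (by fun_prop (disch := assumption) : AnalyticAt ℝ (fun u : ℝ => -(1 / 12) * log u) u)
  | g + 2 =>
    rw [show genusTerm (g + 2) = _ from funext (genusTerm_of_two_le (by omega))]
    exact analyticAt_const.mul (analyticAt_id.fun_zpow hu.ne')

theorem iteratedDeriv_succ_eq_of_eqOn {f F : ℝ → ℝ} {m : ℕ} {s : Set ℝ} (hs : IsOpen s)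
    (hf : s.EqOn (iteratedDeriv m f) F) {x F' : ℝ} (hx : x ∈ s) (hF : HasDerivAt F F' x) :
    iteratedDeriv (m + 1) f x = F' := by
  rw [iteratedDeriv_succ, (hf.eventuallyEq_of_mem (hs.mem_nhds hx)).deriv_eq, hF.deriv]

theorem iteratedDeriv_two_genusTerm_zero {v : ℝ} (hv : 0 < v) :
    iteratedDeriv 2 (genusTerm 0) v = log v := by
  have hfirst : (Set.Ioi 0).EqOn (iteratedDeriv 1 (genusTerm 0)) (fun v => v * log v - v) := by
    intro w (hw : 0 < w)
    refine iteratedDeriv_succ_eq_of_eqOn (m := 0) isOpen_Ioi (fun _ _ => rfl) hw ?_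
    exact ((((hasDerivAt_pow 2 w).div_const 2).mul (hasDerivAt_log hw.ne')).sub
      ((hasDerivAt_pow 2 w).const_mul (3 / 4))).congr_deriv (by field_simp; ring)
  refine iteratedDeriv_succ_eq_of_eqOn isOpen_Ioi hfirst hv ?_
  exact (((hasDerivAt_id v).mul (hasDerivAt_log hv.ne')).sub (hasDerivAt_id v)).congr_deriv
    (by field_simp; simp)

theorem iteratedDeriv_genusTerm {g m j : ℕ} (h : 2 * g + m = j + 3) {v : ℝ} (hv : 0 < v) :
    iteratedDeriv m (genusTerm g) v
      = (-1) ^ m * ((2 * g - 1) * bernoulli (2 * g) / (2 * g)!) * j ! * v ^ (-(j : ℤ) - 1) := by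
  induction m generalizing j v with
  | zero =>
    obtain ⟨k, rfl, rfl⟩ : ∃ k, g = k + 2 ∧ j = 2 * k + 1 := ⟨g - 2, by omega, by omega⟩
    rw [iteratedDeriv_zero, genusTerm_of_two_le (by omega),
      show 2 * (k + 2) = (2 * k + 1) + 1 + 1 + 1 by ring]
    simp only [Nat.factorial_succ]
    push_cast
    rw [show (2 - (2 * ((k : ℤ) + 2))) = -(2 * (k : ℤ) + 1) - 1 by ring,
      show 2 * ((k : ℝ) + 2) - 2 = 2 * ((k : ℝ) + 1) by ring]
    field_simp
    ring
  | succ m ih =>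
    rcases j with _ | j
    · obtain ⟨rfl, rfl⟩ | ⟨rfl, rfl⟩ : g = 1 ∧ m = 0 ∨ g = 0 ∧ m = 2 := by omega
      · refine iteratedDeriv_succ_eq_of_eqOn (s := Set.Ioi 0) isOpen_Ioi (fun _ _ => rfl) hv ?_
        exact ((hasDerivAt_log hv.ne').const_mul _).congr_deriv (by norm_num [bernoulli_two])
      · refine iteratedDeriv_succ_eq_of_eqOn isOpen_Ioi
          (fun w hw => iteratedDeriv_two_genusTerm_zero hw) hv ?_
        exact (hasDerivAt_log hv.ne').congr_deriv (by norm_num)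
    · refine iteratedDeriv_succ_eq_of_eqOn isOpen_Ioi (fun w hw => ih (j := j) (by omega) hw) hv ?_
      refine ((hasDerivAt_zpow _ v (.inl hv.ne')).const_mul _).congr_deriv ?_
      rw [Nat.factorial_succ, show -((j + 1 : ℕ) : ℤ) - 1 = -(j : ℤ) - 1 - 1 by push_cast; ring]
      push_cast
      ring

/-- The coefficient of `ℏ^(2n-2)` in `X (∑ g, ℏ^(2g-2) F g)`, where `X` is the second difference
`F(x + ℏ) - 2 F(x) + F(x - ℏ)`. -/
noncomputable def secondDiffCoeff (F : ℕ → ℝ → ℝ) (n : ℕ) (x : ℝ) : ℝ :=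
  ∑ k ∈ Icc 1 n, 2 / ((2 * k)! : ℝ) * iteratedDeriv (2 * k) (F (n - k)) x

theorem secondDiffCoeff_genusTerm {n : ℕ} (hn : 1 ≤ n) {u : ℝ} (hu : 0 < u) :
    secondDiffCoeff genusTerm n u = if n = 1 then log u else 0 := by
  obtain rfl | hn := eq_or_lt_of_le hn
  · simp [secondDiffCoeff, iteratedDeriv_two_genusTerm_zero hu]
  have hterm : ∀ k ∈ Icc 1 n, 2 / ((2 * k)! : ℝ) * iteratedDeriv (2 * k) (genusTerm (n - k)) u
      = 2 * (2 * n - 3)! * u ^ (-((2 * n - 3 : ℕ) : ℤ) - 1) / (2 * n)!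
        * ((2 * (n - k : ℕ) - 1) * (2 * n).choose (2 * (n - k)) * bernoulli (2 * (n - k))) := by
    intro k hk
    obtain ⟨hk1, hkn⟩ := mem_Icc.1 hk
    rw [iteratedDeriv_genusTerm (j := 2 * n - 3) (by omega) hu, Nat.cast_choose ℝ (by omega),
      show 2 * n - 2 * (n - k) = 2 * k by omega, pow_mul]
    field_simp
    norm_num
  rw [secondDiffCoeff, sum_congr rfl hterm, ← mul_sum, if_neg hn.ne']
  refine mul_eq_zero_of_right _ ?_
  rw [show Icc 1 n = Ico 1 (n + 1) from rfl, sum_Ico_reflect (fun g : ℕ => (2 * (g : ℝ) - 1)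
    * (2 * n).choose (2 * g) * bernoulli (2 * g)) 1 le_rfl, Nat.sub_self, Nat.add_sub_cancel,
    ← range_eq_Ico]
  exact_mod_cast sum_range_two_mul_sub_one_mul_choose_mul_bernoulli_eq_zero hn

theorem secondDiffCoeff_congr {F F' : ℕ → ℝ → ℝ} {x : ℝ} (h : ∀ g, F g =ᶠ[𝓝 x] F' g) (n : ℕ) :
    secondDiffCoeff F n x = secondDiffCoeff F' n x :=
  sum_congr rfl fun _ _ => by rw [(h _).iteratedDeriv_eq]

theorem secondDiffCoeff_fun_sum {ι : Type*} (s : Finset ι) {F : ι → ℕ → ℝ → ℝ} {x : ℝ}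
    (hF : ∀ i ∈ s, ∀ g, ContDiffAt ℝ ∞ (F i g) x) (n : ℕ) :
    secondDiffCoeff (fun g y => ∑ i ∈ s, F i g y) n x = ∑ i ∈ s, secondDiffCoeff (F i) n x := by
  unfold secondDiffCoeff
  rw [sum_comm]
  refine sum_congr rfl fun k _ => ?_
  rw [iteratedDeriv_fun_sum fun i hi => contDiffAt_infty.1 (hF i hi _) _, mul_sum]

theorem iteratedDeriv_two_mul_comp_mul_add {ε : ℝ} (hε : ε = 1 ∨ ε = -1) (f : ℝ → ℝ)
    (d x : ℝ) (k : ℕ) :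
    iteratedDeriv (2 * k) (fun y => f (ε * y + d)) x = iteratedDeriv (2 * k) f (ε * x + d) := by
  rcases hε with rfl | rfl
  · simpa using congrFun (iteratedDeriv_comp_add_const (2 * k) f d) x
  · simp [neg_add_eq_sub, iteratedDeriv_comp_const_sub, pow_mul]

theorem secondDiffCoeff_comp_mul_add {ε : ℝ} (hε : ε = 1 ∨ ε = -1) (F : ℕ → ℝ → ℝ)
    (d x : ℝ) (n : ℕ) :
    secondDiffCoeff (fun g y => F g (ε * y + d)) n x = secondDiffCoeff F n (ε * x + d) :=
  sum_congr rfl fun _ _ => congrArg _ (iteratedDeriv_two_mul_comp_mul_add hε _ d x _)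

theorem secondDiffCoeff_eq_log_prod {ι : Type*} [Fintype ι] {F : ℕ → ℝ → ℝ} {ε d : ι → ℝ}
    {x : ℝ} (hε : ∀ i, ε i = 1 ∨ ε i = -1) (hpos : ∀ i, 0 < ε i * x + d i)
    (hF : ∀ g, ∀ᶠ y in 𝓝 x, (∀ i, 0 < ε i * y + d i) → F g y = ∑ i, genusTerm g (ε i * y + d i))
    {n : ℕ} (hn : 1 ≤ n) :
    secondDiffCoeff F n x = if n = 1 then log (∏ i, (ε i * x + d i)) else 0 := by
  have hsmooth : ∀ i ∈ univ, ∀ g, ContDiffAt ℝ ∞ (fun y => genusTerm g (ε i * y + d i)) x :=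
    fun i _ g => ((analyticAt_genusTerm g (hpos i)).comp (f := fun y => ε i * y + d i)
      (by fun_prop)).contDiffAt
  have hnear : ∀ᶠ y in 𝓝 x, ∀ i, 0 < ε i * y + d i := eventually_all.2 fun i =>
    continuousAt_const.eventually_lt (by fun_prop : Continuous fun y => ε i * y + d i).continuousAt
      (hpos i)
  rw [secondDiffCoeff_congr fun g => hnear.mp (hF g), secondDiffCoeff_fun_sum univ hsmooth]
  simp_rw [secondDiffCoeff_comp_mul_add (hε _), secondDiffCoeff_genusTerm hn (hpos _)]
  split_ifs
  · rw [log_prod fun i _ => (hpos i).ne']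
  · simp

def linearForms (a b c : ℝ) : Fin 4 → ℝ := ![a + b + c, a + b - c, a - b + c, a - b - c]

def IsGenusTermSum (G : ℕ → ℝ → ℝ → ℝ → ℝ) : Prop :=
  ∀ g a b c, 0 < a → 0 < b → 0 < c → (∀ i, 0 < linearForms a b c i) →
    G g a b c = ∑ i, genusTerm g (linearForms a b c i)

namespace IsGenusTermSum

variable {G : ℕ → ℝ → ℝ → ℝ → ℝ} {n : ℕ} {a b c : ℝ}

theorem secondDiffCoeff_fst (hG : IsGenusTermSum G) (hn : 1 ≤ n) (ha : 0 < a) (hb : 0 < b)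
    (hc : 0 < c) (hpos : ∀ i, 0 < linearForms a b c i) :
    secondDiffCoeff (fun g y => G g y b c) n a
      = if n = 1 then log (∏ i, linearForms a b c i) else 0 := by
  have hlin : ∀ y, linearForms y b c = fun i => linearForms 1 0 0 i * y + linearForms 0 b c i := by
    intro y; ext i; fin_cases i <;> simp [linearForms] <;> ring
  rw [hlin a] at hpos ⊢
  refine secondDiffCoeff_eq_log_prod (fun i => by fin_cases i <;> norm_num [linearForms]) hpos
    (fun g => ?_) hn
  filter_upwards [eventually_gt_nhds ha] with y hy hforms
  rw [hG g y b c hy hb hc (hlin y ▸ hforms), hlin y]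

theorem secondDiffCoeff_snd (hG : IsGenusTermSum G) (hn : 1 ≤ n) (ha : 0 < a) (hb : 0 < b)
    (hc : 0 < c) (hpos : ∀ i, 0 < linearForms a b c i) :
    secondDiffCoeff (fun g y => G g a y c) n b
      = if n = 1 then log (∏ i, linearForms a b c i) else 0 := by
  have hlin : ∀ y, linearForms a y c = fun i => linearForms 0 1 0 i * y + linearForms a 0 c i := by
    intro y; ext i; fin_cases i <;> simp [linearForms] <;> ring
  rw [hlin b] at hpos ⊢
  refine secondDiffCoeff_eq_log_prod (fun i => by fin_cases i <;> norm_num [linearForms]) hpos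
    (fun g => ?_) hn
  filter_upwards [eventually_gt_nhds hb] with y hy hforms
  rw [hG g a y c ha hy hc (hlin y ▸ hforms), hlin y]

theorem secondDiffCoeff_thd (hG : IsGenusTermSum G) (hn : 1 ≤ n) (ha : 0 < a) (hb : 0 < b)
    (hc : 0 < c) (hpos : ∀ i, 0 < linearForms a b c i) :
    secondDiffCoeff (fun g y => G g a b y) n c
      = if n = 1 then log (∏ i, linearForms a b c i) else 0 := by
  have hlin : ∀ y, linearForms a b y = fun i => linearForms 0 0 1 i * y + linearForms a b 0 i := by
    intro y; ext i; fin_cases i <;> simp [linearForms] <;> ring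
  rw [hlin c] at hpos ⊢
  refine secondDiffCoeff_eq_log_prod (fun i => by fin_cases i <;> norm_num [linearForms]) hpos
    (fun g => ?_) hn
  filter_upwards [eventually_gt_nhds hc] with y hy hforms
  rw [hG g a b y ha hb hy (hlin y ▸ hforms), hlin y]

end IsGenusTermSum

/-- The formal series `G = Σ_{g≥0} ℏ^{2g−2} G_g(λ₀,λ₁,λ∞)` with
`G_0 = Σ_{ε,η} ((λ₀+ελ₁+ηλ∞)²/2)log(λ₀+ελ₁+ηλ∞) − 3(λ₀²+λ₁²+λ∞²)`,
`G_1 = −(1/12)log Λ`, `G_g = (B_{2g}/(2g(2g−2)))Σ_{ε,η}(λ₀+ελ₁+ηλ∞)^{2−2g}`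
(g ≥ 2), where `Λ = Π_{ε,η}(λ₀+ελ₁+ηλ∞)`, satisfies `X_j G = log Λ`
for each `j ∈ {0,1,∞}`, order by order in `ℏ`. -/
theorem stmt16 (G : ℕ → ℝ → ℝ → ℝ → ℝ)
    (hG0 : ∀ a b c : ℝ, 0 < a → 0 < b → 0 < c →
      0 < a + b + c → 0 < a + b - c → 0 < a - b + c → 0 < a - b - c →
      G 0 a b c =
        (a + b + c) ^ 2 / 2 * Real.log (a + b + c)
        + (a + b - c) ^ 2 / 2 * Real.log (a + b - c)
        + (a - b + c) ^ 2 / 2 * Real.log (a - b + c)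
        + (a - b - c) ^ 2 / 2 * Real.log (a - b - c)
        - 3 * (a ^ 2 + b ^ 2 + c ^ 2))
    (hG1 : ∀ a b c : ℝ, 0 < a → 0 < b → 0 < c →
      0 < a + b + c → 0 < a + b - c → 0 < a - b + c → 0 < a - b - c →
      G 1 a b c = -(1 / 12)
        * Real.log ((a + b + c) * (a + b - c) * (a - b + c) * (a - b - c)))
    (hGg : ∀ g : ℕ, 2 ≤ g → ∀ a b c : ℝ, 0 < a → 0 < b → 0 < c →
      0 < a + b + c → 0 < a + b - c → 0 < a - b + c → 0 < a - b - c →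
      G g a b c = (bernoulli (2 * g) : ℝ) / (2 * (g : ℝ) * (2 * (g : ℝ) - 2))
        * ((a + b + c) ^ (2 - 2 * (g : ℤ)) + (a + b - c) ^ (2 - 2 * (g : ℤ))
           + (a - b + c) ^ (2 - 2 * (g : ℤ)) + (a - b - c) ^ (2 - 2 * (g : ℤ))))
    (n : ℕ) (hn : 1 ≤ n) (a b c : ℝ) (ha : 0 < a) (hb : 0 < b) (hc : 0 < c)
    (h1 : 0 < a + b + c) (h2 : 0 < a + b - c) (h3 : 0 < a - b + c)
    (h4 : 0 < a - b - c) :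
    (∑ k ∈ Finset.Icc 1 n, 2 / (Nat.factorial (2 * k) : ℝ)
          * iteratedDeriv (2 * k) (fun y => G (n - k) y b c) a
        = if n = 1 then
            Real.log ((a + b + c) * (a + b - c) * (a - b + c) * (a - b - c))
          else 0)
    ∧ (∑ k ∈ Finset.Icc 1 n, 2 / (Nat.factorial (2 * k) : ℝ)
          * iteratedDeriv (2 * k) (fun y => G (n - k) a y c) b
        = if n = 1 then
            Real.log ((a + b + c) * (a + b - c) * (a - b + c) * (a - b - c))
          else 0)
    ∧ (∑ k ∈ Finset.Icc 1 n, 2 / (Nat.factorial (2 * k) : ℝ)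
          * iteratedDeriv (2 * k) (fun y => G (n - k) a b y) c
        = if n = 1 then
            Real.log ((a + b + c) * (a + b - c) * (a - b + c) * (a - b - c))
          else 0) := by
  have hG : IsGenusTermSum G := by
    intro g a b c ha hb hc hpos
    obtain ⟨h1, h2, h3, h4⟩ : 0 < a + b + c ∧ 0 < a + b - c ∧ 0 < a - b + c ∧ 0 < a - b - c :=
      ⟨hpos 0, hpos 1, hpos 2, hpos 3⟩
    simp only [Fin.sum_univ_four, linearForms, Matrix.cons_val]
    match g with
    | 0 => rw [hG0 a b c ha hb hc h1 h2 h3 h4]; simp only [genusTerm]; ring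
    | 1 =>
      rw [hG1 a b c ha hb hc h1 h2 h3 h4, log_mul (by positivity) h4.ne',
        log_mul (by positivity) h3.ne', log_mul h1.ne' h2.ne']
      simp only [genusTerm]; ring
    | g + 2 =>
      rw [hGg (g + 2) (by omega) a b c ha hb hc h1 h2 h3 h4]
      simp only [genusTerm_of_two_le (by omega : 2 ≤ g + 2)]; ring
  have hpos : ∀ i, 0 < linearForms a b c i := by intro i; fin_cases i <;> assumption
  have hΛ : ∏ i, linearForms a b c i = (a + b + c) * (a + b - c) * (a - b + c) * (a - b - c) := by
    simp [linearForms, Fin.prod_univ_four]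
  rw [← hΛ]
  exact ⟨hG.secondDiffCoeff_fst hn ha hb hc hpos, hG.secondDiffCoeff_snd hn ha hb hc hpos,
    hG.secondDiffCoeff_thd hn ha hb hc hpos⟩
end
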